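/- arXiv:math/0503203 — 3 statements merged into one kernel-verified Lean document; each statement's English description precedes it below -/
import Mathlib

section
/- Let v be a splitting vertex of G with N(v) = {v_1,…,v_d}, and set J = (vv_1, vv_2, …, vv_d) and K = I(G∖{v}). Then I(G) = J + K is a splitting of I(G); in particular, I(G) is splittable. -/
/-!
Everything is read off exponent vectors: the minimal generators of a monomial ideal are the
monomials of the minimal elements of the upper set of its exponents, and lcm's are suprema.
A minimal generator of `J ∩ K` is `lcm(v a, e)` with `a ∈ N(v)` and `e` an edge of `G ∖ v`;
fixing a linear order on the vertices, the splitting function sends it to `(v a, e)` with `a`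
least. The lcm of any set of `ψ`-values does not involve `v`, whereas every generator of `J ∩ K`
does. If the lcm `ℓ` of a set `S` of generators were also the lcm of their `φ`-values, the
support of `ℓ` would consist of `v` and the chosen partners `a`. For the largest chosen partner
`a = φ(s)`, both ends of the edge of `s` then lie in `N(v)`, so they are admissible partners of
`s` as well; being chosen partners themselves, they are at most `a`, so both equal `a`, which is
absurd.
-/

open MvPolynomial

variable {V : Type*}

/-- The graph obtained from `G` by deleting the vertices in `S`
(and all edges incident to them). -/
def delVerts (G : SimpleGraph V) (S : Set V) : SimpleGraph V where
  Adj x y := G.Adj x y ∧ x ∉ S ∧ y ∉ S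
  symm := ⟨fun _ _ h => ⟨h.1.symm, h.2.2, h.2.1⟩⟩
  loopless := ⟨fun x h => G.loopless.irrefl x h.1⟩

/-- The edge ideal of a simple graph `G`. -/
noncomputable def edgeIdeal (k : Type*) [Field k] (G : SimpleGraph V) :
    Ideal (MvPolynomial V k) :=
  Ideal.span {m | ∃ x y, G.Adj x y ∧ m = X x * X y}

/-- A (monic) monomial in a multivariate polynomial ring. -/
def IsMonomial {k : Type*} [Field k] (m : MvPolynomial V k) : Prop :=
  ∃ s : V →₀ ℕ, m = monomial s 1

/-- A monomial ideal: an ideal generated by a set of (monic) monomials. -/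
def IsMonomialIdeal {k : Type*} [Field k] (I : Ideal (MvPolynomial V k)) : Prop :=
  ∃ S : Set (MvPolynomial V k), (∀ m ∈ S, IsMonomial m) ∧ I = Ideal.span S

/-- The set of minimal (monic) monomial generators of a monomial ideal `I`. -/
def minGens {k : Type*} [Field k] (I : Ideal (MvPolynomial V k)) :
    Set (MvPolynomial V k) :=
  {m | IsMonomial m ∧ m ∈ I ∧
    ∀ m' : MvPolynomial V k, IsMonomial m' → m' ∣ m → m' ≠ m → m' ∉ I}

/-- `L` is the (monic) least common multiple of the set of monomials `S`. -/
def IsLcmOf {k : Type*} [Field k] (S : Set (MvPolynomial V k))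
    (L : MvPolynomial V k) : Prop :=
  IsMonomial L ∧ (∀ m ∈ S, m ∣ L) ∧
    ∀ L' : MvPolynomial V k, IsMonomial L' → (∀ m ∈ S, m ∣ L') → L ∣ L'

/-- Eliahou–Kervaire splitting of a monomial ideal. -/
def IsSplitting {k : Type*} [Field k] (I J K : Ideal (MvPolynomial V k)) : Prop :=
  IsMonomialIdeal J ∧ IsMonomialIdeal K ∧ J ≠ ⊥ ∧ K ≠ ⊥ ∧ I = J + K ∧
  minGens I = minGens J ∪ minGens K ∧ Disjoint (minGens J) (minGens K) ∧
  ∃ φ ψ : MvPolynomial V k → MvPolynomial V k,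
    (∀ w ∈ minGens (J ⊓ K), φ w ∈ minGens J ∧ ψ w ∈ minGens K ∧
        IsLcmOf {φ w, ψ w} w) ∧
    (∀ S ⊆ minGens (J ⊓ K), S.Nonempty →
      ∀ L Lφ Lψ : MvPolynomial V k, IsLcmOf S L → IsLcmOf (φ '' S) Lφ →
        IsLcmOf (ψ '' S) Lψ → (Lφ ∣ L ∧ Lφ ≠ L) ∧ (Lψ ∣ L ∧ Lψ ≠ L))


def minimalCommonUpper {α : Type*} [Preorder α] (T U : Set α) : Set α :=
  {s | Minimal (· ∈ (upperClosure T : Set α) ∩ upperClosure U) s}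

theorem exists_sup_eq_of_mem_minimalCommonUpper {α : Type*} [Lattice α] {T U : Set α}
    {s : α} (hs : s ∈ minimalCommonUpper T U) : ∃ t ∈ T, ∃ u ∈ U, t ⊔ u = s := by
  obtain ⟨⟨t, ht, hts⟩, ⟨u, hu, hus⟩⟩ := hs.prop
  exact ⟨t, ht, u, hu, hs.eq_of_le ⟨⟨t, ht, le_sup_left⟩, ⟨u, hu, le_sup_right⟩⟩ (sup_le hts hus)⟩

theorem Finsupp.support_subset_of_isLUB {ι : Type*} {B : Set (ι →₀ ℕ)} {X : Set ι}
    {ℓ : ι →₀ ℕ} (hB : ∀ t ∈ B, ↑t.support ⊆ X) (hℓ : IsLUB B ℓ) : ↑ℓ.support ⊆ X := by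
  classical
  have hle : ℓ ≤ ℓ.filter (· ∈ X) := hℓ.2 fun t ht z => by
    by_cases hz : z ∈ X
    · simpa [Finsupp.filter_apply, hz] using hℓ.1 ht z
    · simp [hz, Finsupp.notMem_support_iff.1 fun h => hz (hB t ht h)]
  intro z hz
  by_contra hzX
  have := hle z
  simp only [Finsupp.filter_apply, hzX, if_false, nonpos_iff_eq_zero] at this
  exact Finsupp.mem_support_iff.1 hz this

namespace MvPolynomial

variable {σ k : Type*} [Field k]

theorem monomial_one_injective : Function.Injective fun s : σ →₀ ℕ => monomial s (1 : k) :=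
  monomial_left_injective one_ne_zero

theorem isMonomial_monomial_one (s : σ →₀ ℕ) : IsMonomial (monomial s (1 : k)) := ⟨s, rfl⟩

theorem isMonomialIdeal_span_image (T : Set (σ →₀ ℕ)) :
    IsMonomialIdeal (Ideal.span ((fun s => monomial s (1 : k)) '' T)) :=
  ⟨_, by rintro _ ⟨s, -, rfl⟩; exact isMonomial_monomial_one s, rfl⟩

theorem span_image_ne_bot {T : Set (σ →₀ ℕ)} (hT : T.Nonempty) :
    Ideal.span ((fun s => monomial s (1 : k)) '' T) ≠ ⊥ := fun h => by
  obtain ⟨t, ht⟩ := hT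
  simpa using Ideal.span_eq_bot.1 h _ ⟨t, ht, rfl⟩

theorem monomial_one_mem_span_image {T : Set (σ →₀ ℕ)} {s : σ →₀ ℕ} :
    monomial s (1 : k) ∈ Ideal.span ((fun t => monomial t (1 : k)) '' T) ↔
      s ∈ upperClosure T := by
  classical
  simp [mem_ideal_span_monomial_image, support_monomial]

theorem minGens_eq_image_minimal {I : Ideal (MvPolynomial σ k)} {M : Set (σ →₀ ℕ)}
    (hI : ∀ s, monomial s (1 : k) ∈ I ↔ s ∈ M) :
    minGens I = (fun s => monomial s (1 : k)) '' {s | Minimal (· ∈ M) s} := by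
  ext m
  constructor
  · rintro ⟨⟨s, rfl⟩, hsI, hmin⟩
    refine ⟨s, ⟨(hI s).1 hsI, fun t htM hts => ?_⟩, rfl⟩
    by_contra hst
    exact hmin _ (isMonomial_monomial_one t) (monomial_one_dvd_monomial_one.2 hts)
      (fun h => hst (monomial_one_injective h ▸ le_rfl)) ((hI t).2 htM)
  · rintro ⟨s, hs, rfl⟩
    refine ⟨isMonomial_monomial_one s, (hI s).2 hs.prop, ?_⟩
    rintro _ ⟨t, rfl⟩ hts hne htI
    exact hne (congrArg (monomial · 1)
      (hs.eq_of_le ((hI t).1 htI) (monomial_one_dvd_monomial_one.1 hts)))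

theorem minGens_span_image {T : Set (σ →₀ ℕ)} (hT : IsAntichain (· ≤ ·) T) :
    minGens (Ideal.span ((fun t => monomial t (1 : k)) '' T)) =
      (fun t => monomial t (1 : k)) '' T := by
  rw [minGens_eq_image_minimal fun _ => monomial_one_mem_span_image]
  congr 1
  ext s
  exact hT.minimal_mem_upperClosure_iff_mem

theorem minGens_span_image_inf_span_image (T U : Set (σ →₀ ℕ)) :
    minGens (Ideal.span ((fun s => monomial s (1 : k)) '' T) ⊓
      Ideal.span ((fun s => monomial s (1 : k)) '' U)) =
      (fun s => monomial s (1 : k)) '' minimalCommonUpper T U := by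
  refine minGens_eq_image_minimal fun s => ?_
  rw [Submodule.mem_inf, monomial_one_mem_span_image, monomial_one_mem_span_image]
  rfl

theorem isLcmOf_image_iff {A : Set (σ →₀ ℕ)} {ℓ : σ →₀ ℕ} :
    IsLcmOf ((fun s => monomial s (1 : k)) '' A) (monomial ℓ 1) ↔ IsLUB A ℓ := by
  have hub : ∀ u, (∀ m ∈ (fun s => monomial s (1 : k)) '' A, m ∣ monomial u 1) ↔
      u ∈ upperBounds A := by
    simp [upperBounds, monomial_one_dvd_monomial_one]
  refine ⟨fun ⟨_, hℓ, hmin⟩ => ⟨(hub ℓ).1 hℓ, fun u hu =>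
      monomial_one_dvd_monomial_one.1 (hmin _ (isMonomial_monomial_one u) ((hub u).2 hu))⟩,
    fun h => ⟨isMonomial_monomial_one ℓ, (hub ℓ).2 h.1, ?_⟩⟩
  rintro _ ⟨u, rfl⟩ hu
  exact monomial_one_dvd_monomial_one.2 (h.2 ((hub u).1 hu))

theorem dvd_and_ne_of_not_isLUB_image {A : Set (σ →₀ ℕ)} {f : (σ →₀ ℕ) → σ →₀ ℕ}
    (hf : ∀ s ∈ A, f s ≤ s) {ℓ : σ →₀ ℕ} (hℓ : IsLUB A ℓ) (hfℓ : ¬ IsLUB (f '' A) ℓ)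
    {L : MvPolynomial σ k} (hL : IsLcmOf ((fun s => monomial s (1 : k)) '' (f '' A)) L) :
    L ∣ monomial ℓ 1 ∧ L ≠ monomial ℓ 1 := by
  obtain ⟨ℓf, rfl⟩ := hL.1
  rw [isLcmOf_image_iff] at hL
  have hub : ℓ ∈ upperBounds (f '' A) := by
    rintro _ ⟨s, hs, rfl⟩
    exact (hf s hs).trans (hℓ.1 hs)
  refine ⟨monomial_one_dvd_monomial_one.2 (hL.2 hub), fun h => hfℓ ?_⟩
  rwa [← monomial_one_injective h]

theorem isSplitting_of_exponents {I J K : Ideal (MvPolynomial σ k)} {TJ TK : Set (σ →₀ ℕ)}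
    (hI : I = Ideal.span ((fun s => monomial s (1 : k)) '' (TJ ∪ TK)))
    (hJ : J = Ideal.span ((fun s => monomial s (1 : k)) '' TJ))
    (hK : K = Ideal.span ((fun s => monomial s (1 : k)) '' TK))
    (hT : IsAntichain (· ≤ ·) (TJ ∪ TK)) (hdisj : Disjoint TJ TK)
    (hTJ : TJ.Nonempty) (hTK : TK.Nonempty) (f g : (σ →₀ ℕ) → σ →₀ ℕ)
    (hfg : ∀ s ∈ minimalCommonUpper TJ TK, f s ∈ TJ ∧ g s ∈ TK ∧ f s ⊔ g s = s)
    (hf : ∀ A ⊆ minimalCommonUpper TJ TK, A.Nonempty → ∀ ℓ, IsLUB A ℓ → ¬ IsLUB (f '' A) ℓ)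
    (hg : ∀ A ⊆ minimalCommonUpper TJ TK, A.Nonempty → ∀ ℓ, IsLUB A ℓ → ¬ IsLUB (g '' A) ℓ) :
    IsSplitting I J K := by
  subst hI hJ hK
  let lift (h : (σ →₀ ℕ) → σ →₀ ℕ) : MvPolynomial σ k → MvPolynomial σ k :=
    Function.extend (fun s => monomial s (1 : k)) (fun s => monomial (h s) 1) 0
  have lift_image (h : (σ →₀ ℕ) → σ →₀ ℕ) (A : Set (σ →₀ ℕ)) :
      lift h '' ((fun s => monomial s (1 : k)) '' A) =
        (fun s => monomial s (1 : k)) '' (h '' A) := by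
    simp only [Set.image_image, lift, monomial_one_injective.extend_apply]
  have hminJ := minGens_span_image (k := k) (hT.subset Set.subset_union_left)
  have hminK := minGens_span_image (k := k) (hT.subset Set.subset_union_right)
  refine ⟨isMonomialIdeal_span_image TJ, isMonomialIdeal_span_image TK,
    span_image_ne_bot hTJ, span_image_ne_bot hTK,
    by rw [Set.image_union, Ideal.span_union, Submodule.add_eq_sup],
    by rw [minGens_span_image hT, hminJ, hminK, Set.image_union],
    by rw [hminJ, hminK]; exact (Set.disjoint_image_iff monomial_one_injective).2 hdisj,
    lift f, lift g, ?_, ?_⟩ <;> rw [minGens_span_image_inf_span_image]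
  · rintro _ ⟨s, hs, rfl⟩
    obtain ⟨hfs, hgs, hsup⟩ := hfg s hs
    simp only [hminJ, hminK, lift, monomial_one_injective.extend_apply]
    refine ⟨⟨f s, hfs, rfl⟩, ⟨g s, hgs, rfl⟩, ?_⟩
    have := (isLcmOf_image_iff (k := k)).2 (hsup ▸ isLUB_pair)
    rwa [Set.image_pair] at this
  · intro S hS hSne L Lφ Lψ hL hLφ hLψ
    obtain ⟨A, hA, rfl⟩ := Set.subset_image_iff.1 hS
    obtain ⟨ℓ, rfl⟩ := hL.1
    rw [isLcmOf_image_iff] at hL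
    rw [lift_image] at hLφ hLψ
    have hAne : A.Nonempty := hSne.of_image
    exact ⟨dvd_and_ne_of_not_isLUB_image (fun s hs => le_sup_left.trans (hfg s (hA hs)).2.2.le)
        hL (hf A hA hAne ℓ hL) hLφ,
      dvd_and_ne_of_not_isLUB_image (fun s hs => le_sup_right.trans (hfg s (hA hs)).2.2.le)
        hL (hg A hA hAne ℓ hL) hLψ⟩

end MvPolynomial

section EdgeIdeal

variable (G : SimpleGraph V) (v : V)

noncomputable def edgeExponent (x y : V) : V →₀ ℕ := Finsupp.single x 1 + Finsupp.single y 1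

def edgeExponents : Set (V →₀ ℕ) := {s | ∃ x y, G.Adj x y ∧ edgeExponent x y = s}

def starExponents : Set (V →₀ ℕ) := edgeExponent v '' G.neighborSet v

theorem X_mul_X_eq_monomial_edgeExponent {k : Type*} [Field k] (x y : V) :
    (X x * X y : MvPolynomial V k) = monomial (edgeExponent x y) 1 := by
  simp [X, monomial_mul, edgeExponent]

theorem edgeExponent_comm (x y : V) : edgeExponent x y = edgeExponent y x := add_comm _ _

variable {G v}

theorem edgeExponent_pos_iff {x y z : V} : 0 < edgeExponent x y z ↔ z = x ∨ z = y := by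
  classical
  simp only [edgeExponent, Finsupp.add_apply, Finsupp.single_apply]
  by_cases hx : x = z <;> by_cases hy : y = z <;> simp [hx, hy, eq_comm]

theorem edgeExponent_le_iff {x y : V} (hxy : x ≠ y) {s : V →₀ ℕ} :
    edgeExponent x y ≤ s ↔ 0 < s x ∧ 0 < s y := by
  classical
  refine ⟨fun h => ⟨(edgeExponent_pos_iff.2 (.inl rfl)).trans_le (h x),
    (edgeExponent_pos_iff.2 (.inr rfl)).trans_le (h y)⟩, fun ⟨hx, hy⟩ z => ?_⟩
  simp only [edgeExponent, Finsupp.add_apply, Finsupp.single_apply]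
  by_cases hxz : x = z <;> by_cases hyz : y = z <;> simp_all <;> omega

theorem support_edgeExponent_subset (x y : V) :
    ↑(edgeExponent x y).support ⊆ ({x, y} : Set V) := fun _ hz =>
  edgeExponent_pos_iff.1 (Nat.pos_of_ne_zero (Finsupp.mem_support_iff.1 hz))

variable (G) in
theorem edgeIdeal_eq_span_edgeExponents (k : Type*) [Field k] :
    edgeIdeal k G = Ideal.span ((fun s => monomial s (1 : k)) '' edgeExponents G) := by
  rw [edgeIdeal, Set.image]
  simp_rw [edgeExponents, X_mul_X_eq_monomial_edgeExponent]
  congr 1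
  ext m
  constructor
  · rintro ⟨x, y, hxy, rfl⟩
    exact ⟨_, ⟨x, y, hxy, rfl⟩, rfl⟩
  · rintro ⟨_, ⟨x, y, hxy, rfl⟩, rfl⟩
    exact ⟨x, y, hxy, rfl⟩

variable (G v) in
theorem span_X_mul_X_neighborSet_eq_span_starExponents (k : Type*) [Field k] :
    Ideal.span ((fun w => (X v * X w : MvPolynomial V k)) '' G.neighborSet v) =
      Ideal.span ((fun s => monomial s (1 : k)) '' starExponents G v) := by
  simp_rw [starExponents, Set.image_image, X_mul_X_eq_monomial_edgeExponent]

theorem isAntichain_edgeExponents : IsAntichain (· ≤ ·) (edgeExponents G) := by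
  rintro _ ⟨x, y, hxy, rfl⟩ _ ⟨a, b, -, rfl⟩ hne hle
  rw [edgeExponent_le_iff hxy.ne] at hle
  rcases edgeExponent_pos_iff.1 hle.1 with rfl | rfl <;>
    rcases edgeExponent_pos_iff.1 hle.2 with rfl | rfl
  exacts [hxy.ne rfl, hne rfl, hne (edgeExponent_comm _ _), hxy.ne rfl]

variable (G v) in
theorem edgeExponents_eq_starExponents_union :
    edgeExponents G = starExponents G v ∪ edgeExponents (delVerts G {v}) := by
  ext s
  constructor
  · rintro ⟨x, y, hxy, rfl⟩
    by_cases hx : x = v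
    · exact .inl ⟨y, hx ▸ hxy, by rw [hx]⟩
    by_cases hy : y = v
    · exact .inl ⟨x, hy ▸ hxy.symm, by rw [hy, edgeExponent_comm]⟩
    exact .inr ⟨x, y, ⟨hxy, hx, hy⟩, rfl⟩
  · rintro (⟨w, hw, rfl⟩ | ⟨x, y, hxy, rfl⟩)
    exacts [⟨v, w, hw, rfl⟩, ⟨x, y, hxy.1, rfl⟩]

theorem apply_eq_zero_of_mem_edgeExponents_delVerts {t : V →₀ ℕ}
    (ht : t ∈ edgeExponents (delVerts G {v})) : t v = 0 := by
  obtain ⟨x, y, ⟨-, hx, hy⟩, rfl⟩ := ht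
  by_contra h
  rcases edgeExponent_pos_iff.1 (Nat.pos_of_ne_zero h) with rfl | rfl
  exacts [hx rfl, hy rfl]

theorem apply_pos_of_mem_upperClosure_starExponents {s : V →₀ ℕ}
    (hs : s ∈ upperClosure (starExponents G v)) : 0 < s v := by
  obtain ⟨_, ⟨w, -, rfl⟩, hws⟩ := hs
  exact (edgeExponent_pos_iff.2 (.inl rfl)).trans_le (hws v)

theorem disjoint_starExponents_edgeExponents_delVerts :
    Disjoint (starExponents G v) (edgeExponents (delVerts G {v})) :=
  Set.disjoint_left.2 fun _ hs ht =>
    (apply_pos_of_mem_upperClosure_starExponents (subset_upperClosure hs)).ne'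
      (apply_eq_zero_of_mem_edgeExponents_delVerts ht)

variable (G v) in
def starPartners (s : V →₀ ℕ) : Set V :=
  {a | G.Adj v a ∧ ∃ u ∈ edgeExponents (delVerts G {v}), edgeExponent v a ⊔ u = s}

theorem starPartners_nonempty {s : V →₀ ℕ}
    (hs : s ∈ minimalCommonUpper (starExponents G v) (edgeExponents (delVerts G {v}))) :
    (starPartners G v s).Nonempty := by
  obtain ⟨_, ⟨a, ha, rfl⟩, u, hu, hsup⟩ := exists_sup_eq_of_mem_minimalCommonUpper hs
  exact ⟨a, ha, u, hu, hsup⟩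

theorem starPartners_subset_support (s : V →₀ ℕ) : starPartners G v s ⊆ s.support :=
  fun _ ⟨_, _, _, hsup⟩ => Finsupp.mem_support_iff.2
    ((edgeExponent_pos_iff.2 (.inr rfl)).trans_le ((le_sup_left : _ ≤ _ ⊔ _).trans hsup.le _)).ne'

theorem exists_isLeast_starPartners [LinearOrder V] {s : V →₀ ℕ}
    (hs : s ∈ minimalCommonUpper (starExponents G v) (edgeExponents (delVerts G {v}))) :
    ∃ a, IsLeast (starPartners G v s) a := by
  obtain ⟨a, ha, hmin⟩ := Set.exists_min_image _ id
    (s.support.finite_toSet.subset (starPartners_subset_support s)) (starPartners_nonempty hs)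
  exact ⟨a, ha, hmin⟩

theorem mem_starPartners_of_adj {s : V →₀ ℕ}
    (hs : s ∈ minimalCommonUpper (starExponents G v) (edgeExponents (delVerts G {v})))
    {b c : V} (hvb : G.Adj v b) (hbc : (delVerts G {v}).Adj b c) (hbcs : edgeExponent b c ≤ s) :
    b ∈ starPartners G v s := by
  have hvbs : edgeExponent v b ≤ s := (edgeExponent_le_iff hvb.ne).2
    ⟨apply_pos_of_mem_upperClosure_starExponents hs.prop.1,
      (edgeExponent_pos_iff.2 (.inl rfl)).trans_le (hbcs b)⟩
  refine ⟨hvb, _, ⟨b, c, hbc, rfl⟩, hs.eq_of_le ?_ (sup_le hvbs hbcs)⟩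
  exact ⟨⟨_, ⟨b, hvb, rfl⟩, le_sup_left⟩, ⟨_, ⟨b, c, hbc, rfl⟩, le_sup_right⟩⟩

theorem not_isLUB_image_of_mem_edgeExponents_delVerts {A : Set (V →₀ ℕ)}
    (hA : A ⊆ minimalCommonUpper (starExponents G v) (edgeExponents (delVerts G {v})))
    (hAne : A.Nonempty) {g : (V →₀ ℕ) → V →₀ ℕ}
    (hg : ∀ s ∈ A, g s ∈ edgeExponents (delVerts G {v})) {ℓ : V →₀ ℕ} (hℓ : IsLUB A ℓ) :
    ¬ IsLUB (g '' A) ℓ := by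
  intro h
  have hsupp : ↑ℓ.support ⊆ ({v}ᶜ : Set V) := Finsupp.support_subset_of_isLUB
    (by rintro _ ⟨s, hs, rfl⟩ z hz rfl
        exact Finsupp.mem_support_iff.1 hz (apply_eq_zero_of_mem_edgeExponents_delVerts (hg s hs)))
    h
  obtain ⟨s, hs⟩ := hAne
  exact hsupp (Finsupp.mem_support_iff.2 ((apply_pos_of_mem_upperClosure_starExponents
    (hA hs).prop.1).trans_le (hℓ.1 hs v)).ne') rfl

theorem not_isLUB_image_edgeExponent_least_starPartner [LinearOrder V] {A : Set (V →₀ ℕ)}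
    (hA : A ⊆ minimalCommonUpper (starExponents G v) (edgeExponents (delVerts G {v})))
    (hAne : A.Nonempty) {p : (V →₀ ℕ) → V} (hp : ∀ s ∈ A, IsLeast (starPartners G v s) (p s))
    {ℓ : V →₀ ℕ} (hℓ : IsLUB A ℓ) : ¬ IsLUB ((fun s => edgeExponent v (p s)) '' A) ℓ := by
  intro h
  have hsupp : ↑ℓ.support ⊆ insert v (p '' A) := Finsupp.support_subset_of_isLUB
    (by
      rintro _ ⟨s, hs, rfl⟩
      exact (support_edgeExponent_subset _ _).trans
        (Set.insert_subset_insert (Set.singleton_subset_iff.2 ⟨s, hs, rfl⟩)))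
    h
  have hfin : (p '' A).Finite := ℓ.support.finite_toSet.subset <| by
    rintro _ ⟨s, hs, rfl⟩
    exact Finsupp.support_mono (hℓ.1 hs) (starPartners_subset_support s (hp s hs).1)
  obtain ⟨_, ⟨s, hs, rfl⟩, hmax⟩ := Set.exists_max_image _ id hfin (hAne.image p)
  obtain ⟨-, _, ⟨b, c, hbc, rfl⟩, hsup⟩ := (hp s hs).1
  have eq_partner {x y : V} (hxy : (delVerts G {v}).Adj x y)
      (he : edgeExponent x y = edgeExponent b c) : x = p s := by
    have hxys : edgeExponent x y ≤ s := by
      rw [he]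
      exact le_sup_right.trans hsup.le
    have hxℓ : x ∈ ℓ.support := Finsupp.mem_support_iff.2
      ((edgeExponent_pos_iff.2 (.inl rfl)).trans_le ((hxys.trans (hℓ.1 hs)) x)).ne'
    obtain ⟨s', hs', hx⟩ := (hsupp hxℓ).resolve_left hxy.2.1
    have := mem_starPartners_of_adj (hA hs) (hx ▸ (hp s' hs').1.1) hxy hxys
    exact le_antisymm (hmax x ⟨s', hs', hx⟩) ((hp s hs).2 this)
  exact hbc.1.ne ((eq_partner hbc rfl).trans (eq_partner hbc.symm (edgeExponent_comm _ _)).symm)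

end EdgeIdeal

theorem stmt3_general (k : Type*) [Field k]
    (G : SimpleGraph V) (v : V)
    (hdeg : (G.neighborSet v).Nonempty)
    (hsplit : ∃ x y, (delVerts G {v}).Adj x y) :
    IsSplitting (edgeIdeal k G)
      (Ideal.span ((fun w => (X v * X w : MvPolynomial V k)) '' G.neighborSet v))
      (edgeIdeal k (delVerts G {v})) := by
  let _ : LinearOrder V := WellOrderingRel.isWellOrder.linearOrder
  have : Nonempty V := ⟨v⟩
  set M := minimalCommonUpper (starExponents G v) (edgeExponents (delVerts G {v}))
  choose! p hp using fun s (hs : s ∈ M) => exists_isLeast_starPartners hs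
  choose! q hq using fun s (hs : s ∈ M) => (hp s hs).1.2
  obtain ⟨x, y, hxy⟩ := hsplit
  refine isSplitting_of_exponents
    (by rw [edgeIdeal_eq_span_edgeExponents, edgeExponents_eq_starExponents_union G v])
    (span_X_mul_X_neighborSet_eq_span_starExponents G v k) (edgeIdeal_eq_span_edgeExponents _ k)
    (edgeExponents_eq_starExponents_union G v ▸ isAntichain_edgeExponents)
    disjoint_starExponents_edgeExponents_delVerts (hdeg.image _) ⟨_, x, y, hxy, rfl⟩
    (fun s => edgeExponent v (p s)) q
    (fun s hs => ⟨⟨p s, (hp s hs).1.1, rfl⟩, hq s hs⟩)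
    (fun A hA hAne ℓ => not_isLUB_image_edgeExponent_least_starPartner hA hAne
      fun s hs => hp s (hA hs))
    (fun A hA hAne ℓ => not_isLUB_image_of_mem_edgeExponents_delVerts hA hAne
      fun s hs => (hq s (hA hs)).1)

/-- if `v` is a splitting vertex of `G` (i.e. `deg v > 0` and
`G \ {v}` has at least one edge), `J = (v v₁, …, v v_d)` with
`N(v) = {v₁, …, v_d}`, and `K = I(G \ {v})`, then `I(G) = J + K` is a
splitting of `I(G)`. -/
theorem stmt3 (k : Type*) [Field k] [Fintype V] [DecidableEq V]
    (G : SimpleGraph V) (v : V)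
    (hdeg : (G.neighborSet v).Nonempty)
    (hsplit : ∃ x y, (delVerts G {v}).Adj x y) :
    IsSplitting (edgeIdeal k G)
      (Ideal.span ((fun w => (X v * X w : MvPolynomial V k)) '' G.neighborSet v))
      (edgeIdeal k (delVerts G {v})) :=
  stmt3_general k G v hdeg hsplit
end

section
/- Let v be a splitting vertex of G with N(v) = {v_1,…,v_d}, and set J = (vv_1,…,vv_d) and K = I(G∖{v}). Then J ∩ K = v·I(G_(v)) + vv_1·I(G_1) + vv_2·I(G_2) + ⋯ + vv_d·I(G_d), where m·I denotes the product of the principal ideal generated by the monomial m with the ideal I. -/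
open MvPolynomial

variable {V : Type*}

/-- The graph `G_(v)`: its edges are the edges of the induced subgraph of `G`
on `N(v)` together with all edges of `G` incident to some neighbor of `v` but
not incident to `v`. -/
def splitSub (G : SimpleGraph V) (v : V) : SimpleGraph V where
  Adj x y := G.Adj x y ∧ x ≠ v ∧ y ≠ v ∧ (G.Adj v x ∨ G.Adj v y)
  symm := ⟨fun _ _ h => ⟨h.1.symm, h.2.2.1, h.2.1, h.2.2.2.symm⟩⟩
  loopless := ⟨fun x h => G.loopless.irrefl x h.1⟩

/-!
Every ideal in the identity is generated by squarefree monomials `x_s = ∏ i ∈ s, X i`, and for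
these `x_s ∣ x_t ↔ s ⊆ t`, the intersection of two such ideals is generated by the lcms
`x_(s ∪ t)`, and `x_c * x_t = x_(c ∪ t)` when `c` and `t` are disjoint. So `J ∩ K` is generated by
the `x_({v, w} ∪ {a, b})` with `vw` an edge and `ab` an edge avoiding `v`, and it remains to compare
generators. If `v` is adjacent to `a` or `b`, or `w` is, such an lcm is a multiple of a generator
of `v · I(G_(v))`; otherwise `ab` is an edge of `G ∖ (N(v) ∪ N(w))` and the lcm is a generator of
the summand of `w`. Conversely every generator of the right-hand side is a multiple of such an lcm.
-/
lemma Finsupp.sum_single_one_le_iff {σ : Type*} (s : Finset σ) (m : σ →₀ ℕ) :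
    ∑ i ∈ s, Finsupp.single i 1 ≤ m ↔ s ⊆ m.support := by
  classical
  simp only [Finsupp.le_def, Finsupp.finsetSum_apply, Finsupp.single_apply, Finset.sum_ite_eq',
    Finset.subset_iff, Finsupp.mem_support_iff]
  refine ⟨fun h i hi => ?_, fun h i => ?_⟩
  · simpa [hi, Nat.one_le_iff_ne_zero] using h i
  · split_ifs with hi
    · exact Nat.one_le_iff_ne_zero.mpr (h hi)
    · exact Nat.zero_le _

namespace MvPolynomial

variable {σ R : Type*} [CommSemiring R]

variable (R) in
noncomputable def squarefreeMonomialIdeal (S : Set (Finset σ)) : Ideal (MvPolynomial σ R) :=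
  Ideal.span ((fun s => ∏ i ∈ s, X i) '' S)

lemma mem_squarefreeMonomialIdeal {S : Set (Finset σ)} {f : MvPolynomial σ R} :
    f ∈ squarefreeMonomialIdeal R S ↔ ∀ m ∈ f.support, ∃ s ∈ S, s ⊆ m.support := by
  have h : (fun s : Finset σ => ∏ i ∈ s, (X i : MvPolynomial σ R)) =
      (fun e => monomial e 1) ∘ fun s => ∑ i ∈ s, Finsupp.single i 1 := by
    funext s
    exact (monomial_sum_one s fun i => Finsupp.single i 1).symm
  rw [squarefreeMonomialIdeal, h, Set.image_comp, mem_ideal_span_monomial_image]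
  simp only [Set.exists_mem_image, Finsupp.sum_single_one_le_iff]

lemma squarefreeMonomialIdeal_le_squarefreeMonomialIdeal {S T : Set (Finset σ)}
    (h : ∀ s ∈ S, ∃ t ∈ T, t ⊆ s) :
    squarefreeMonomialIdeal R S ≤ squarefreeMonomialIdeal R T := by
  classical
  refine Ideal.span_le.mpr ?_
  rintro _ ⟨s, hs, rfl⟩
  obtain ⟨t, ht, hts⟩ := h s hs
  change ∏ i ∈ s, X i ∈ _
  rw [← Finset.prod_sdiff hts]
  exact Ideal.mul_mem_left _ _ (Ideal.subset_span ⟨t, ht, rfl⟩)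

lemma squarefreeMonomialIdeal_inf [DecidableEq σ] (S T : Set (Finset σ)) :
    squarefreeMonomialIdeal R S ⊓ squarefreeMonomialIdeal R T =
      squarefreeMonomialIdeal R (Set.image2 (· ∪ ·) S T) := by
  ext f
  simp only [Submodule.mem_inf, mem_squarefreeMonomialIdeal, Set.exists_mem_image2,
    Finset.union_subset_iff]
  refine forall₂_and.symm.trans (forall₂_congr fun m _ => ⟨?_, ?_⟩)
  · rintro ⟨⟨s, hs, hsm⟩, t, ht, htm⟩
    exact ⟨s, hs, t, ht, hsm, htm⟩
  · rintro ⟨s, hs, t, ht, hsm, htm⟩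
    exact ⟨⟨s, hs, hsm⟩, t, ht, htm⟩

lemma squarefreeMonomialIdeal_union (S T : Set (Finset σ)) :
    squarefreeMonomialIdeal R (S ∪ T) =
      squarefreeMonomialIdeal R S ⊔ squarefreeMonomialIdeal R T := by
  rw [squarefreeMonomialIdeal, Set.image_union, Ideal.span_union]
  rfl

lemma squarefreeMonomialIdeal_biUnion {ι : Type*} (N : Set ι) (S : ι → Set (Finset σ)) :
    squarefreeMonomialIdeal R (⋃ i ∈ N, S i) = ⨆ i ∈ N, squarefreeMonomialIdeal R (S i) := by
  rw [squarefreeMonomialIdeal, Set.image_iUnion₂, Ideal.span, Submodule.span_iUnion₂]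
  rfl

lemma span_prod_X_mul_squarefreeMonomialIdeal [DecidableEq σ] {c : Finset σ}
    {T : Set (Finset σ)} (h : ∀ t ∈ T, Disjoint c t) :
    Ideal.span {∏ i ∈ c, X i} * squarefreeMonomialIdeal R T =
      squarefreeMonomialIdeal R ((c ∪ ·) '' T) := by
  rw [squarefreeMonomialIdeal, squarefreeMonomialIdeal, Ideal.span_mul_span', Set.singleton_mul,
    Set.image_image, Set.image_image]
  exact congrArg _ (Set.image_congr fun t ht => (Finset.prod_union (h t ht)).symm)

end MvPolynomial

lemma delVerts_anti (G : SimpleGraph V) {S T : Set V} (h : S ⊆ T) : delVerts G T ≤ delVerts G S :=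
  fun _ _ hab => ⟨hab.1, fun ha => hab.2.1 (h ha), fun hb => hab.2.2 (h hb)⟩

section EdgeIdeal

variable [DecidableEq V]

def edgeVertexPairs (H : SimpleGraph V) : Set (Finset V) := {s | ∃ a b, H.Adj a b ∧ s = {a, b}}

lemma edgeVertexPairs_mono {H H' : SimpleGraph V} (h : H ≤ H') :
    edgeVertexPairs H ⊆ edgeVertexPairs H' := by
  rintro _ ⟨a, b, hab, rfl⟩
  exact ⟨a, b, h hab, rfl⟩

lemma edgeIdeal_eq_squarefreeMonomialIdeal (k : Type*) [Field k] (H : SimpleGraph V) :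
    edgeIdeal k H = squarefreeMonomialIdeal k (edgeVertexPairs H) := by
  rw [edgeIdeal, squarefreeMonomialIdeal]
  congr 1
  ext p
  constructor
  · rintro ⟨a, b, hab, rfl⟩
    exact ⟨{a, b}, ⟨a, b, hab, rfl⟩, Finset.prod_pair hab.ne⟩
  · rintro ⟨_, ⟨a, b, hab, rfl⟩, rfl⟩
    exact ⟨a, b, hab, Finset.prod_pair hab.ne⟩

lemma span_X_mul_X_image_eq (k : Type*) [Field k] {v : V} {N : Set V} (hv : v ∉ N) :
    Ideal.span ((fun w => (X v * X w : MvPolynomial V k)) '' N) =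
      squarefreeMonomialIdeal k ((fun w => {v, w}) '' N) := by
  rw [squarefreeMonomialIdeal, Set.image_image]
  exact congrArg _ (Set.image_congr fun w hw =>
    (Finset.prod_pair (ne_of_mem_of_not_mem hw hv).symm).symm)

lemma disjoint_of_mem_edgeVertexPairs {H : SimpleGraph V} {c : Finset V}
    (hc : ∀ x ∈ c, ∀ y, ¬ H.Adj x y) : ∀ t ∈ edgeVertexPairs H, Disjoint c t := by
  rintro _ ⟨a, b, hab, rfl⟩
  simp only [Finset.disjoint_insert_right, Finset.disjoint_singleton_right]
  exact ⟨fun ha => hc a ha b hab, fun hb => hc b hb a hab.symm⟩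

end EdgeIdeal

section Splitting

variable [DecidableEq V] (k : Type*) [Field k] {G : SimpleGraph V} {v : V}

lemma span_X_mul_edgeIdeal_splitSub :
    Ideal.span {(X v : MvPolynomial V k)} * edgeIdeal k (splitSub G v) =
      squarefreeMonomialIdeal k (({v} ∪ ·) '' edgeVertexPairs (splitSub G v)) := by
  rw [edgeIdeal_eq_squarefreeMonomialIdeal, ← span_prod_X_mul_squarefreeMonomialIdeal,
    Finset.prod_singleton]
  exact disjoint_of_mem_edgeVertexPairs (H := splitSub G v)
    fun x hx y h => h.2.1 (Finset.mem_singleton.mp hx)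

lemma span_X_mul_X_mul_edgeIdeal_delVerts {w : V} (hw : G.Adj v w) :
    Ideal.span {(X v * X w : MvPolynomial V k)} *
        edgeIdeal k (delVerts G (G.neighborSet v ∪ G.neighborSet w)) =
      squarefreeMonomialIdeal k
        (({v, w} ∪ ·) '' edgeVertexPairs (delVerts G (G.neighborSet v ∪ G.neighborSet w))) := by
  rw [edgeIdeal_eq_squarefreeMonomialIdeal, ← span_prod_X_mul_squarefreeMonomialIdeal,
    Finset.prod_pair hw.ne]
  refine disjoint_of_mem_edgeVertexPairs
    (H := delVerts G (G.neighborSet v ∪ G.neighborSet w)) fun x hx y h => ?_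
  rcases Finset.mem_insert.mp hx with rfl | hx
  · exact h.2.1 (.inr hw.symm)
  · exact h.2.1 (.inl (Finset.mem_singleton.mp hx ▸ hw))

variable {k}

lemma exists_generator_subset_of_adj {w a b : V} (hw : G.Adj v w)
    (hab : (delVerts G {v}).Adj a b) :
    (∃ t ∈ edgeVertexPairs (splitSub G v), {v} ∪ t ⊆ {v, w} ∪ {a, b}) ∨
      ∃ u ∈ G.neighborSet v, ∃ t ∈ edgeVertexPairs (delVerts G (G.neighborSet v ∪ G.neighborSet u)),
        {v, u} ∪ t ⊆ {v, w} ∪ {a, b} := by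
  obtain ⟨hab, hav, hbv⟩ := hab
  rw [Set.mem_singleton_iff] at hav hbv
  have hwv : w ≠ v := hw.ne.symm
  by_cases hva : G.Adj v a
  · exact .inl ⟨{a, b}, ⟨a, b, ⟨hab, hav, hbv, .inl hva⟩, rfl⟩, by grind⟩
  by_cases hvb : G.Adj v b
  · exact .inl ⟨{a, b}, ⟨a, b, ⟨hab, hav, hbv, .inr hvb⟩, rfl⟩, by grind⟩
  by_cases hwa : G.Adj w a
  · exact .inl ⟨{w, a}, ⟨w, a, ⟨hwa, hwv, hav, .inl hw⟩, rfl⟩, by grind⟩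
  by_cases hwb : G.Adj w b
  · exact .inl ⟨{w, b}, ⟨w, b, ⟨hwb, hwv, hbv, .inl hw⟩, rfl⟩, by grind⟩
  refine .inr ⟨w, hw, {a, b}, ⟨a, b, ⟨hab, ?_, ?_⟩, rfl⟩, subset_rfl⟩ <;>
    simp [hva, hvb, hwa, hwb]

lemma exists_generator_subset_of_splitSub_adj {a b : V} (hab : (splitSub G v).Adj a b) :
    ∃ w ∈ G.neighborSet v, ∃ t ∈ edgeVertexPairs (delVerts G {v}), {v, w} ∪ t ⊆ {v} ∪ {a, b} := by
  obtain ⟨hab, hav, hbv, hva | hvb⟩ := hab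
  · exact ⟨a, hva, {a, b}, ⟨a, b, ⟨hab, hav, hbv⟩, rfl⟩, by grind⟩
  · exact ⟨b, hvb, {a, b}, ⟨a, b, ⟨hab, hav, hbv⟩, rfl⟩, by grind⟩

end Splitting

theorem stmt5_general (k : Type*) [Field k] [DecidableEq V]
    (G : SimpleGraph V) (v : V) :
    Ideal.span ((fun w => (X v * X w : MvPolynomial V k)) '' G.neighborSet v) ⊓
        edgeIdeal k (delVerts G {v}) =
      Ideal.span {(X v : MvPolynomial V k)} * edgeIdeal k (splitSub G v) +
        ⨆ vi ∈ G.neighborSet v,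
          Ideal.span {(X v * X vi : MvPolynomial V k)} *
            edgeIdeal k (delVerts G (G.neighborSet v ∪ G.neighborSet vi)) := by
  rw [span_X_mul_X_image_eq k G.notMem_neighborSet_self, edgeIdeal_eq_squarefreeMonomialIdeal,
    squarefreeMonomialIdeal_inf, span_X_mul_edgeIdeal_splitSub,
    biSup_congr fun w (hw : w ∈ G.neighborSet v) => span_X_mul_X_mul_edgeIdeal_delVerts k hw,
    ← squarefreeMonomialIdeal_biUnion, Submodule.add_eq_sup, ← squarefreeMonomialIdeal_union]
  refine le_antisymm (squarefreeMonomialIdeal_le_squarefreeMonomialIdeal ?_)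
    (squarefreeMonomialIdeal_le_squarefreeMonomialIdeal ?_)
  · rintro _ ⟨_, ⟨w, hw, rfl⟩, _, ⟨a, b, hab, rfl⟩, rfl⟩
    rcases exists_generator_subset_of_adj hw hab with ⟨t, ht, hsub⟩ | ⟨u, hu, t, ht, hsub⟩
    · exact ⟨_, .inl ⟨t, ht, rfl⟩, hsub⟩
    · exact ⟨_, .inr (Set.mem_biUnion hu ⟨t, ht, rfl⟩), hsub⟩
  · rintro _ (⟨_, ⟨a, b, hab, rfl⟩, rfl⟩ | hmem)
    · obtain ⟨w, hw, t, ht, hsub⟩ := exists_generator_subset_of_splitSub_adj hab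
      exact ⟨_, Set.mem_image2_of_mem (Set.mem_image_of_mem _ hw) ht, hsub⟩
    · obtain ⟨w, hw : G.Adj v w, t, ht, rfl⟩ := Set.mem_iUnion₂.mp hmem
      refine ⟨_, Set.mem_image2_of_mem (Set.mem_image_of_mem _ hw) ?_, subset_rfl⟩
      exact edgeVertexPairs_mono (delVerts_anti G (Set.singleton_subset_iff.mpr (.inr hw.symm))) ht

/-- if `v` is a splitting vertex of `G` with `N(v) = {v₁,…,v_d}`,
`J = (v v₁, …, v v_d)` and `K = I(G \ {v})`, then
`J ∩ K = v·I(G_(v)) + v v₁·I(G₁) + ⋯ + v v_d·I(G_d)`,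
where `Gᵢ = G \ (N(v) ∪ N(vᵢ))`. -/
theorem stmt5 (k : Type*) [Field k] [Fintype V] [DecidableEq V]
    (G : SimpleGraph V) (v : V)
    (hdeg : (G.neighborSet v).Nonempty)
    (hsplit : ∃ x y, (delVerts G {v}).Adj x y) :
    Ideal.span ((fun w => (X v * X w : MvPolynomial V k)) '' G.neighborSet v) ⊓
        edgeIdeal k (delVerts G {v}) =
      Ideal.span {(X v : MvPolynomial V k)} * edgeIdeal k (splitSub G v) +
        ⨆ vi ∈ G.neighborSet v,
          Ideal.span {(X v * X vi : MvPolynomial V k)} *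
            edgeIdeal k (delVerts G (G.neighborSet v ∪ G.neighborSet vi)) :=
  stmt5_general k G v
end

section
/- Let G be a finite simple graph and let uv be an edge of G with deg u = 1. Set T = G∖{u} and H = G∖({v}∪N(v)). Then ν(G) = max{ν(T), ν(H) + 1}, where ν denotes the maximum size of a set of pairwise disconnected edges. -/
/-!
An edge at the leaf `u` must be `uv`. A maximum family of pairwise disconnected edges of `G`
either avoids `u`, and then lives in `T`, or contains `uv`, and then its other edges avoid `v` and
all neighbours of `v`, so they live in `H`. Conversely, families in `T` stay disconnected in `G`,
and `uv` can be added to any family in `H`, because `u`, `v` and all their neighbours lie in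
`{v} ∪ N(v)`.
-/

variable {V : Type*}

/-- Two edges are disconnected if they share no vertex and no endpoint of the
first is adjacent to an endpoint of the second. -/
def DisconnEdges (X : SimpleGraph V) (e f : Sym2 V) : Prop :=
  ∀ a ∈ e, ∀ b ∈ f, a ≠ b ∧ ¬ X.Adj a b

/-- `nu X` is the maximum size of a set of pairwise disconnected edges of `X`
(`0` if `X` has no edges). -/
noncomputable def nu [Fintype V] [DecidableEq V] (X : SimpleGraph V) : ℕ :=
  sSup {n | ∃ S : Finset (Sym2 V), S.card = n ∧ (S : Set (Sym2 V)) ⊆ X.edgeSet ∧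
    (S : Set (Sym2 V)).Pairwise (DisconnEdges X)}

/-- A set of pairwise disconnected edges is usually called an induced matching,
and `nu` is the induced matching number. -/
def IsInducedMatching (X : SimpleGraph V) (M : Finset (Sym2 V)) : Prop :=
  (M : Set (Sym2 V)) ⊆ X.edgeSet ∧ (M : Set (Sym2 V)).Pairwise (DisconnEdges X)

section

variable {X G : SimpleGraph V} {e f : Sym2 V} {M : Finset (Sym2 V)} {S : Set V} {u v : V}

lemma DisconnEdges.symm (h : DisconnEdges X e f) : DisconnEdges X f e :=
  fun a ha b hb => ⟨(h b hb a ha).1.symm, fun hab => (h b hb a ha).2 hab.symm⟩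

lemma DisconnEdges.notMem_insert_neighborSet (h : DisconnEdges X e f) (hv : v ∈ e)
    {b : V} (hb : b ∈ f) : b ∉ insert v (X.neighborSet v) := by
  rintro (rfl | hvb)
  exacts [(h b hv b hb).1 rfl, (h v hv b hb).2 hvb]

lemma mem_edgeSet_delVerts :
    e ∈ (delVerts G S).edgeSet ↔ e ∈ G.edgeSet ∧ ∀ a ∈ e, a ∉ S := by
  induction e using Sym2.ind with
  | h x y => simp [delVerts]

lemma eq_of_mem_edgeSet_of_neighborSet_eq_singleton (hNu : G.neighborSet u = {v})
    (he : e ∈ G.edgeSet) (hu : u ∈ e) : e = s(u, v) := by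
  obtain ⟨w, rfl⟩ := Sym2.mem_iff_exists.1 hu
  have hw : w ∈ G.neighborSet u := he
  rw [hNu, Set.mem_singleton_iff] at hw
  rw [hw]

namespace IsInducedMatching

lemma mono {N : Finset (Sym2 V)} (hM : IsInducedMatching X M) (h : N ⊆ M) :
    IsInducedMatching X N :=
  ⟨(Finset.coe_subset.2 h).trans hM.1, hM.2.mono (Finset.coe_subset.2 h)⟩

lemma insert [DecidableEq V] (hM : IsInducedMatching X M) (he : e ∈ X.edgeSet)
    (hdis : ∀ f ∈ M, DisconnEdges X e f) : IsInducedMatching X (insert e M) := by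
  refine ⟨?_, ?_⟩
  · rw [Finset.coe_insert]
    exact Set.insert_subset he hM.1
  · rw [Finset.coe_insert]
    exact hM.2.insert fun f hf _ => ⟨hdis f hf, (hdis f hf).symm⟩

end IsInducedMatching

lemma isInducedMatching_delVerts_iff :
    IsInducedMatching (delVerts G S) M ↔
      IsInducedMatching G M ∧ ∀ e ∈ M, ∀ a ∈ e, a ∉ S := by
  constructor
  · rintro ⟨hE, hP⟩
    have hS : ∀ e ∈ M, ∀ a ∈ e, a ∉ S := fun e he => (mem_edgeSet_delVerts.1 (hE he)).2
    refine ⟨⟨fun e he => (mem_edgeSet_delVerts.1 (hE he)).1, ?_⟩, hS⟩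
    intro f hf g hg hfg a ha b hb
    obtain ⟨hab, hadj⟩ := hP hf hg hfg a ha b hb
    exact ⟨hab, fun h => hadj ⟨h, hS f hf a ha, hS g hg b hb⟩⟩
  · rintro ⟨⟨hE, hP⟩, hS⟩
    refine ⟨fun e he => mem_edgeSet_delVerts.2 ⟨hE he, hS e he⟩, ?_⟩
    intro f hf g hg hfg a ha b hb
    obtain ⟨hab, hadj⟩ := hP hf hg hfg a ha b hb
    exact ⟨hab, fun h => hadj h.1⟩

variable [Fintype V]

lemma nu_bddAbove (X : SimpleGraph V) :
    BddAbove {n | ∃ M : Finset (Sym2 V), M.card = n ∧ IsInducedMatching X M} :=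
  ⟨Fintype.card (Sym2 V), fun _ ⟨M, hM, _⟩ => hM ▸ M.card_le_univ⟩

variable [DecidableEq V]

lemma IsInducedMatching.card_le_nu (hM : IsInducedMatching X M) : M.card ≤ nu X :=
  le_csSup (nu_bddAbove X) ⟨M, rfl, hM⟩

lemma exists_isInducedMatching_card_eq_nu (X : SimpleGraph V) :
    ∃ M, IsInducedMatching X M ∧ M.card = nu X := by
  have hempty : IsInducedMatching X ∅ := by simp [IsInducedMatching]
  have hne : {n | ∃ M : Finset (Sym2 V), M.card = n ∧ IsInducedMatching X M}.Nonempty :=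
    ⟨0, ∅, rfl, hempty⟩
  obtain ⟨M, hM, hMX⟩ := Nat.sSup_mem hne (nu_bddAbove X)
  exact ⟨M, hMX, hM⟩

lemma nu_delVerts_le (G : SimpleGraph V) (S : Set V) : nu (delVerts G S) ≤ nu G := by
  obtain ⟨M, hM, hcard⟩ := exists_isInducedMatching_card_eq_nu (delVerts G S)
  exact hcard ▸ (isInducedMatching_delVerts_iff.1 hM).1.card_le_nu

lemma nu_delVerts_insert_neighborSet_add_one_le (huv : G.Adj u v)
    (hu : G.neighborSet u ⊆ insert v (G.neighborSet v)) :
    nu (delVerts G (insert v (G.neighborSet v))) + 1 ≤ nu G := by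
  set S := insert v (G.neighborSet v)
  obtain ⟨M, hM, hcard⟩ := exists_isInducedMatching_card_eq_nu (delVerts G S)
  obtain ⟨hMG, hMS⟩ := isInducedMatching_delVerts_iff.1 hM
  -- Both ends of `uv` lie in `S` together with their neighbourhoods, while `M` avoids `S`.
  have hclosed : ∀ a ∈ s(u, v), a ∈ S ∧ G.neighborSet a ⊆ S := by
    intro a ha
    rcases Sym2.mem_iff.1 ha with rfl | rfl
    exacts [⟨Set.mem_insert_of_mem _ huv.symm, hu⟩,
      ⟨Set.mem_insert _ _, Set.subset_insert _ _⟩]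
  have hdis : ∀ f ∈ M, DisconnEdges G s(u, v) f := fun f hf a ha b hb =>
    ⟨fun hab => hMS f hf b hb (hab ▸ (hclosed a ha).1),
      fun hab => hMS f hf b hb ((hclosed a ha).2 hab)⟩
  have huvM : s(u, v) ∉ M := fun h => hMS _ h v (Sym2.mem_mk_right u v) (Set.mem_insert _ _)
  rw [← hcard, ← Finset.card_insert_of_notMem huvM]
  exact (hMG.insert huv hdis).card_le_nu

lemma nu_le_max_of_neighborSet_eq_singleton (hNu : G.neighborSet u = {v}) :
    nu G ≤ max (nu (delVerts G {u})) (nu (delVerts G (insert v (G.neighborSet v))) + 1) := by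
  obtain ⟨M, hM, hcard⟩ := exists_isInducedMatching_card_eq_nu G
  by_cases huvM : s(u, v) ∈ M
  · have hH : IsInducedMatching (delVerts G (insert v (G.neighborSet v))) (M.erase s(u, v)) := by
      refine isInducedMatching_delVerts_iff.2 ⟨hM.mono (M.erase_subset _), ?_⟩
      intro f hf b hb
      have hdis := hM.2 huvM (M.mem_of_mem_erase hf) (M.ne_of_mem_erase hf).symm
      exact hdis.notMem_insert_neighborSet (Sym2.mem_mk_right u v) hb
    rw [← hcard, ← Finset.card_erase_add_one huvM]
    exact le_max_of_le_right (Nat.add_le_add_right hH.card_le_nu 1)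
  · have hT : IsInducedMatching (delVerts G {u}) M := by
      refine isInducedMatching_delVerts_iff.2 ⟨hM, fun e he a ha hau => huvM ?_⟩
      rw [Set.mem_singleton_iff] at hau
      subst hau
      rwa [← eq_of_mem_edgeSet_of_neighborSet_eq_singleton hNu (hM.1 he) ha]
    exact hcard ▸ le_max_of_le_left hT.card_le_nu

end

/-- if `uv` is an edge of `G` with `deg u = 1`, `T = G \ {u}` and
`H = G \ ({v} ∪ N(v))`, then `ν(G) = max {ν(T), ν(H) + 1}`. -/
theorem stmt8 [Fintype V] [DecidableEq V] (G : SimpleGraph V) (u v : V)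
    (huv : G.Adj u v) (hdeg : (G.neighborSet u).ncard = 1) :
    nu G = max (nu (delVerts G {u}))
        (nu (delVerts G (insert v (G.neighborSet v))) + 1) := by
  have hNu : G.neighborSet u = {v} := by
    obtain ⟨a, ha⟩ := Set.ncard_eq_one.1 hdeg
    have hv : v ∈ G.neighborSet u := huv
    rw [ha, Set.mem_singleton_iff] at hv
    rw [ha, hv]
  refine le_antisymm (nu_le_max_of_neighborSet_eq_singleton hNu)
    (max_le (nu_delVerts_le G {u}) (nu_delVerts_insert_neighborSet_add_one_le huv ?_))
  rw [hNu, Set.singleton_subset_iff]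
  exact Set.mem_insert v _
end
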